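/- Let a > 0 and let u ∈ C⁴([0,a]) satisfy the elastica equation (1/√(1+u'²)) · d/dx( κ_u'/√(1+u'²) ) + (1/2)κ_u³ = 0 on (0,a), where κ_u = u''/(1+u'²)^{3/2}. Then the function x ↦ 2 u'''(x)/(1+u'(x)²)^{5/2} − 5 u''(x)² u'(x)/(1+u'(x)²)^{7/2} is constant on (0,a). -/

import Mathlib

/-!
Write `σ = √(1 + u'²) = ds/dx` and `κ_s = κ'/σ` for the derivative of the curvature with respect
to arc length. The function in question equals `(2κ_s + u'κ²)/σ = 2κ_s cos θ + κ² sin θ`, where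
`θ` is the tangent angle: it is the vertical component of `2κ_s N + κ² T`. By the Frenet equations
the arc-length derivative of this vector is `(2κ_ss + κ³) N`, and the elastica equation says
precisely `2κ_ss + κ³ = 0`.
-/

open Real MeasureTheory

/-- The curvature of the graph `(x, u x)`. -/
noncomputable def curv (u : ℝ → ℝ) (x : ℝ) : ℝ :=
  iteratedDeriv 2 u x / (1 + deriv u x ^ 2) ^ ((3:ℝ)/2)

/-- `u` satisfies the elastica equation
`(1/√(1+u'²)) (κ_u'/√(1+u'²))' + κ_u³/2 = 0` on the set `E`. -/
def ElasticaOn (u : ℝ → ℝ) (E : Set ℝ) : Prop :=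
  ∀ x ∈ E,
    (1 / Real.sqrt (1 + deriv u x ^ 2)) *
        deriv (fun y => deriv (curv u) y / Real.sqrt (1 + deriv u y ^ 2)) x
      + (1/2) * curv u x ^ 3 = 0

theorem ContDiff.hasDerivAt_iteratedDeriv {n : WithTop ℕ∞} {u : ℝ → ℝ} (hu : ContDiff ℝ n u)
    {k : ℕ} (hk : k < n) (x : ℝ) : HasDerivAt (iteratedDeriv k u) (iteratedDeriv (k + 1) u x) x := by
  rw [iteratedDeriv_succ]
  exact (hu.differentiable_iteratedDeriv k hk x).hasDerivAt

/-- The hypotheses are the Frenet equations `u'' = κσ³`, `κ' = κ_s σ`, `σ' = u'κσ²` and the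
elastica equation `κ_s' = -σκ³/2`, in the parameter `x` with `p = u'` and `g = κ_s`. -/
theorem hasDerivAt_elasticaForce_eq_zero {p κ g σ : ℝ → ℝ} {x : ℝ}
    (hp : HasDerivAt p (κ x * σ x ^ 3) x) (hκ : HasDerivAt κ (g x * σ x) x)
    (hg : HasDerivAt g (-(σ x * κ x ^ 3) / 2) x) (hσ : HasDerivAt σ (p x * κ x * σ x ^ 2) x)
    (hσsq : σ x ^ 2 = 1 + p x ^ 2) (hσ0 : σ x ≠ 0) :
    HasDerivAt (fun y => (2 * g y + p y * κ y ^ 2) / σ y) 0 x := by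
  refine (((hg.const_mul 2).add (hp.mul (hκ.pow 2))).div hσ hσ0).congr_deriv ?_
  simp only [Pi.add_apply, Pi.mul_apply, Pi.pow_apply]
  field_simp
  linear_combination κ x ^ 3 * hσsq

/-- `ds/dx` along the graph of `u`. -/
noncomputable def graphSpeed (u : ℝ → ℝ) (x : ℝ) : ℝ :=
  √(1 + deriv u x ^ 2)

/-- `κ_s`, the function differentiated in `ElasticaOn`. -/
noncomputable def curvArcDeriv (u : ℝ → ℝ) (x : ℝ) : ℝ :=
  deriv (curv u) x / graphSpeed u x

section Graph

variable {u : ℝ → ℝ} {x : ℝ}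

theorem graphSpeed_pos : 0 < graphSpeed u x :=
  sqrt_pos.2 (by positivity)

theorem graphSpeed_sq : graphSpeed u x ^ 2 = 1 + deriv u x ^ 2 :=
  sq_sqrt (by positivity)

theorem one_add_deriv_sq_rpow_div_two (r : ℝ) :
    (1 + deriv u x ^ 2) ^ (r / 2) = graphSpeed u x ^ r :=
  rpow_div_two_eq_sqrt r (by positivity)

theorem curv_eq_div_graphSpeed_pow : curv u x = iteratedDeriv 2 u x / graphSpeed u x ^ 3 := by
  rw [curv, one_add_deriv_sq_rpow_div_two, rpow_ofNat]

theorem hasDerivAt_deriv_eq_curv_mul (hu : ContDiff ℝ 2 u) :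
    HasDerivAt (deriv u) (curv u x * graphSpeed u x ^ 3) x := by
  have h := hu.hasDerivAt_iteratedDeriv (k := 1) (by norm_num) x
  rw [iteratedDeriv_one] at h
  rwa [curv_eq_div_graphSpeed_pow, div_mul_cancel₀ _ (pow_ne_zero _ graphSpeed_pos.ne')]

theorem hasDerivAt_graphSpeed (hu : ContDiff ℝ 2 u) :
    HasDerivAt (graphSpeed u) (deriv u x * curv u x * graphSpeed u x ^ 2) x := by
  refine (((hasDerivAt_deriv_eq_curv_mul hu).pow 2).const_add 1).sqrt
    (by positivity : (1:ℝ) + deriv u x ^ 2 ≠ 0) |>.congr_deriv ?_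
  have hσ := graphSpeed_pos (u := u) (x := x)
  change _ / (2 * graphSpeed u x) = _
  field_simp
  ring

theorem hasDerivAt_curv (hu : ContDiff ℝ 3 u) :
    HasDerivAt (curv u) ((iteratedDeriv 3 u x * graphSpeed u x ^ 2
      - 3 * deriv u x * iteratedDeriv 2 u x ^ 2) / graphSpeed u x ^ 5) x := by
  have hcurv : curv u = fun y => iteratedDeriv 2 u y / graphSpeed u y ^ 3 :=
    funext fun _ => curv_eq_div_graphSpeed_pow
  have hσ := graphSpeed_pos (u := u) (x := x)
  rw [hcurv]
  refine ((hu.hasDerivAt_iteratedDeriv (k := 2) (by norm_num) x).div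
    ((hasDerivAt_graphSpeed (hu.of_le (by norm_num))).pow 3) (pow_ne_zero 3 hσ.ne')).congr_deriv ?_
  rw [curv_eq_div_graphSpeed_pow, Pi.pow_apply]
  field_simp
  ring

theorem curvArcDeriv_eq (hu : ContDiff ℝ 3 u) :
    curvArcDeriv u x = (iteratedDeriv 3 u x * graphSpeed u x ^ 2
      - 3 * deriv u x * iteratedDeriv 2 u x ^ 2) / graphSpeed u x ^ 6 := by
  have hσ := graphSpeed_pos (u := u) (x := x)
  rw [curvArcDeriv, (hasDerivAt_curv hu).deriv]
  field_simp

theorem hasDerivAt_curv_eq_div_graphSpeed_pow_curvArcDeriv_mul (hu : ContDiff ℝ 3 u) :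
    HasDerivAt (curv u) (curvArcDeriv u x * graphSpeed u x) x := by
  rw [curvArcDeriv, div_mul_cancel₀ _ graphSpeed_pos.ne']
  exact (hasDerivAt_curv hu).differentiableAt.hasDerivAt

theorem differentiable_curvArcDeriv (hu : ContDiff ℝ 4 u) : Differentiable ℝ (curvArcDeriv u) := by
  have hu2 : ContDiff ℝ 2 u := hu.of_le (by norm_num)
  have hσ : Differentiable ℝ (graphSpeed u) := fun _ => (hasDerivAt_graphSpeed hu2).differentiableAt
  have hu' : Differentiable ℝ (deriv u) := fun _ => (hasDerivAt_deriv_eq_curv_mul hu2).differentiableAt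
  rw [show curvArcDeriv u = _ from funext fun _ => curvArcDeriv_eq (hu.of_le (by norm_num))]
  exact (((hu.differentiable_iteratedDeriv 3 (by norm_num)).mul (hσ.pow 2)).sub
    ((hu'.const_mul 3).mul ((hu.differentiable_iteratedDeriv 2 (by norm_num)).pow 2))).div
    (hσ.pow 6) fun _ => pow_ne_zero _ graphSpeed_pos.ne'

theorem ElasticaOn.hasDerivAt_curvArcDeriv {E : Set ℝ} (he : ElasticaOn u E) (hu : ContDiff ℝ 4 u)
    (hx : x ∈ E) : HasDerivAt (curvArcDeriv u) (-(graphSpeed u x * curv u x ^ 3) / 2) x := by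
  have h := he x hx
  change 1 / graphSpeed u x * deriv (curvArcDeriv u) x + 1 / 2 * curv u x ^ 3 = 0 at h
  have hσ := graphSpeed_pos (u := u) (x := x)
  refine (differentiable_curvArcDeriv hu x).hasDerivAt.congr_deriv ?_
  field_simp at h ⊢
  linear_combination h

theorem elasticaForce_eq (hu : ContDiff ℝ 3 u) :
    2 * iteratedDeriv 3 u x / (1 + deriv u x ^ 2) ^ ((5:ℝ)/2)
        - 5 * iteratedDeriv 2 u x ^ 2 * deriv u x / (1 + deriv u x ^ 2) ^ ((7:ℝ)/2)
      = (2 * curvArcDeriv u x + deriv u x * curv u x ^ 2) / graphSpeed u x := by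
  have hσ := graphSpeed_pos (u := u) (x := x)
  rw [one_add_deriv_sq_rpow_div_two, one_add_deriv_sq_rpow_div_two, rpow_ofNat, rpow_ofNat,
    curvArcDeriv_eq hu, curv_eq_div_graphSpeed_pow]
  field_simp
  ring

end Graph

theorem stmt_6_general (a : ℝ) (u : ℝ → ℝ) (hu : ContDiff ℝ 4 u)
    (heq : ElasticaOn u (Set.Ioo 0 a)) :
    ∀ x ∈ Set.Ioo (0:ℝ) a, ∀ y ∈ Set.Ioo (0:ℝ) a,
      2 * iteratedDeriv 3 u x / (1 + deriv u x ^ 2) ^ ((5:ℝ)/2)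
          - 5 * iteratedDeriv 2 u x ^ 2 * deriv u x / (1 + deriv u x ^ 2) ^ ((7:ℝ)/2)
        = 2 * iteratedDeriv 3 u y / (1 + deriv u y ^ 2) ^ ((5:ℝ)/2)
          - 5 * iteratedDeriv 2 u y ^ 2 * deriv u y / (1 + deriv u y ^ 2) ^ ((7:ℝ)/2) := by
  intro x hx y hy
  have hu3 : ContDiff ℝ 3 u := hu.of_le (by norm_num)
  have hu2 : ContDiff ℝ 2 u := hu.of_le (by norm_num)
  have hconserved : ∀ z ∈ Set.Ioo 0 a, HasDerivAt
      (fun t => (2 * curvArcDeriv u t + deriv u t * curv u t ^ 2) / graphSpeed u t) 0 z :=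
    fun _ hz => hasDerivAt_elasticaForce_eq_zero (hasDerivAt_deriv_eq_curv_mul hu2)
      (hasDerivAt_curv_eq_div_graphSpeed_pow_curvArcDeriv_mul hu3) (heq.hasDerivAt_curvArcDeriv hu hz)
      (hasDerivAt_graphSpeed hu2) graphSpeed_sq graphSpeed_pos.ne'
  rw [elasticaForce_eq hu3, elasticaForce_eq hu3]
  exact isOpen_Ioo.is_const_of_deriv_eq_zero isPreconnected_Ioo
    (fun z hz => (hconserved z hz).differentiableAt.differentiableWithinAt)
    (fun z hz => (hconserved z hz).deriv) hx hy

/-- If `u ∈ C⁴` solves the elastica equation on `(0,a)`, then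
`x ↦ 2u'''/(1+u'²)^{5/2} − 5u''²u'/(1+u'²)^{7/2}` is constant on `(0,a)`. -/
theorem stmt_6 (a : ℝ) (ha : 0 < a) (u : ℝ → ℝ) (hu : ContDiff ℝ 4 u)
    (heq : ElasticaOn u (Set.Ioo 0 a)) :
    ∀ x ∈ Set.Ioo (0:ℝ) a, ∀ y ∈ Set.Ioo (0:ℝ) a,
      2 * iteratedDeriv 3 u x / (1 + deriv u x ^ 2) ^ ((5:ℝ)/2)
          - 5 * iteratedDeriv 2 u x ^ 2 * deriv u x / (1 + deriv u x ^ 2) ^ ((7:ℝ)/2)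
        = 2 * iteratedDeriv 3 u y / (1 + deriv u y ^ 2) ^ ((5:ℝ)/2)
          - 5 * iteratedDeriv 2 u y ^ 2 * deriv u y / (1 + deriv u y ^ 2) ^ ((7:ℝ)/2) :=
  stmt_6_general a u hu heq
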